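/- arXiv:2004.02076 — 4 statements merged into one kernel-verified Lean document; each statement's English description precedes it below -/
import Mathlib

section
/- For any two distinct l1, l2 ∈ [k] with l1 < l2, the intersection I_{l1} ∩ I_{l2} is the singleton {(l1-1)·k + (l2 - l1·(l1+1)/2)}. -/
open Finset

/-- `p¹_l(a) = (l-1)k + (a - l(l-1)/2)` -/
def pOne (k l a : ℕ) : ℕ := (l - 1) * k + a - l * (l - 1) / 2

/-- `p²_l(a) = (a-1)k + (l - a(a+1)/2)` -/
def pTwo (k l a : ℕ) : ℕ := (a - 1) * k + l - a * (a + 1) / 2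

/-- `I¹_l` : first-type packet indices of group `l` -/
def I1 (k l : ℕ) : Finset ℕ := (Finset.Icc 1 (k - l)).image (pOne k l)

/-- `I²_l` : second-type packet indices of group `l` -/
def I2 (k l : ℕ) : Finset ℕ := (Finset.Icc 1 (l - 1)).image (pTwo k l)

/-- `I_l = I¹_l ∪ I²_l` -/
def Igrp (k l : ℕ) : Finset ℕ := I1 k l ∪ I2 k l

/-!
Number the pairs `(i, j)` with `1 ≤ i < j ≤ k` row by row, the pair `(i, j)` getting the number
`pairIndex k i j`. Then `I¹_l` numbers the pairs `(l, j)` and `I²_l` the pairs `(i, l)`, so `I_l`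
is the set of numbers of the pairs containing `l`. Since the numbering is injective, the only
number shared by `I_{l₁}` and `I_{l₂}` is that of the pair `(l₁, l₂)`.
-/

/-- The number of pairs `(i, j)` with `1 ≤ i ≤ m` and `i < j ≤ k`. -/
def rowStart (k m : ℕ) : ℕ := m * k - m * (m + 1) / 2

def pairIndex (k i j : ℕ) : ℕ := rowStart k (i - 1) + (j - i)

lemma rowStart_add_one {k m : ℕ} (h : m < k) :
    rowStart k (m + 1) = rowStart k m + (k - (m + 1)) := by
  have := Nat.mul_le_mul_left m (show m + 1 ≤ k from h)
  have : (m + 1) * (m + 1 + 1) = m * (m + 1) + 2 * (m + 1) := by ring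
  have : (m + 1) * k = m * k + k := by ring
  unfold rowStart
  omega

lemma rowStart_monotoneOn (k : ℕ) : MonotoneOn (rowStart k) (Set.Iic k) :=
  monotoneOn_of_le_add_one Set.ordConnected_Iic fun m _ _ hm ↦ by
    rw [rowStart_add_one (Order.add_one_le_iff.mp hm)]
    exact Nat.le_add_right _ _

lemma pairIndex_lt_pairIndex {k i j i' j' : ℕ} (hi : 1 ≤ i) (hj : j ≤ k) (hii' : i < i')
    (hij' : i' < j') (hj' : j' ≤ k) : pairIndex k i j < pairIndex k i' j' := by
  have hrow := rowStart_add_one (k := k) (m := i - 1) (by omega)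
  have hmono := rowStart_monotoneOn k (a := i - 1 + 1) (b := i' - 1)
    (Set.mem_Iic.mpr (by omega)) (Set.mem_Iic.mpr (by omega)) (by omega)
  unfold pairIndex
  omega

lemma pairIndex_inj {k i j i' j' : ℕ} (hi : 1 ≤ i) (hij : i < j) (hj : j ≤ k)
    (hi' : 1 ≤ i') (hij' : i' < j') (hj' : j' ≤ k)
    (h : pairIndex k i j = pairIndex k i' j') : i = i' ∧ j = j' := by
  rcases lt_trichotomy i i' with hlt | rfl | hgt
  · exact absurd h (pairIndex_lt_pairIndex hi hj hlt hij' hj').ne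
  · unfold pairIndex at h
    omega
  · exact absurd h (pairIndex_lt_pairIndex hi' hj' hgt hij hj).ne'

lemma pOne_eq_pairIndex {k l : ℕ} (a : ℕ) (hl : 1 ≤ l) (hlk : l ≤ k) :
    pOne k l a = pairIndex k l (l + a) := by
  obtain ⟨m, rfl⟩ : ∃ m, l = m + 1 := ⟨l - 1, by omega⟩
  have := Nat.mul_le_mul_left m hlk
  have : (m + 1) * m = m * (m + 1) := Nat.mul_comm _ _
  simp only [pOne, pairIndex, rowStart, Nat.add_sub_cancel]
  omega

lemma pTwo_eq_pairIndex {k l a : ℕ} (ha : 1 ≤ a) (hal : a < l) (hl : l ≤ k) :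
    pTwo k l a = pairIndex k a l := by
  obtain ⟨m, rfl⟩ : ∃ m, a = m + 1 := ⟨a - 1, by omega⟩
  have := Nat.mul_le_mul_left m (show m + 1 ≤ k by omega)
  have : (m + 1) * (m + 1 + 1) = m * (m + 1) + 2 * (m + 1) := by ring
  simp only [pTwo, pairIndex, rowStart, Nat.add_sub_cancel]
  omega

lemma mem_Igrp {k l x : ℕ} (hl : 1 ≤ l) (hlk : l ≤ k) :
    x ∈ Igrp k l ↔
      ∃ i j, 1 ≤ i ∧ i < j ∧ j ≤ k ∧ (i = l ∨ j = l) ∧ pairIndex k i j = x := by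
  simp only [Igrp, I1, I2, mem_union, mem_image, mem_Icc]
  constructor
  · rintro (⟨a, ⟨ha, hak⟩, rfl⟩ | ⟨a, ⟨ha, hal⟩, rfl⟩)
    · exact ⟨l, l + a, hl, by omega, by omega, .inl rfl, (pOne_eq_pairIndex a hl hlk).symm⟩
    · exact ⟨a, l, ha, by omega, hlk, .inr rfl, (pTwo_eq_pairIndex ha (by omega) hlk).symm⟩
  · rintro ⟨i, j, hi, hij, hjk, rfl | rfl, rfl⟩
    · refine .inl ⟨j - i, ⟨by omega, by omega⟩, ?_⟩
      rw [pOne_eq_pairIndex _ hi (by omega), Nat.add_sub_cancel' hij.le]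
    · exact .inr ⟨i, ⟨hi, by omega⟩, pTwo_eq_pairIndex hi hij hjk⟩

theorem Igrp_inter_singleton_general (k l₁ l₂ : ℕ)
    (h1 : 1 ≤ l₁) (h2 : l₁ < l₂) (h3 : l₂ ≤ k) :
    Igrp k l₁ ∩ Igrp k l₂ = {(l₁ - 1) * k + l₂ - l₁ * (l₁ + 1) / 2} := by
  have htarget : (l₁ - 1) * k + l₂ - l₁ * (l₁ + 1) / 2 = pairIndex k l₁ l₂ :=
    pTwo_eq_pairIndex h1 h2 h3
  ext x
  rw [mem_inter, mem_Igrp h1 (by omega), mem_Igrp (by omega) h3, mem_singleton, htarget]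
  constructor
  · rintro ⟨⟨i, j, hi, hij, hj, hl₁, rfl⟩, ⟨i', j', hi', hij', hj', hl₂, he⟩⟩
    obtain ⟨rfl, rfl⟩ := pairIndex_inj hi' hij' hj' hi hij hj he
    obtain ⟨rfl, rfl⟩ : i' = l₁ ∧ j' = l₂ := by omega
    rfl
  · rintro rfl
    exact ⟨⟨l₁, l₂, h1, h2, h3, .inl rfl, rfl⟩, ⟨l₁, l₂, h1, h2, h3, .inr rfl, rfl⟩⟩

/-- For `l₁ < l₂` in `[k]`, `I_{l₁} ∩ I_{l₂} = {(l₁-1)k + (l₂ - l₁(l₁+1)/2)}`. -/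
theorem Igrp_inter_singleton (k l₁ l₂ : ℕ) (hk : 2 ≤ k)
    (h1 : 1 ≤ l₁) (h2 : l₁ < l₂) (h3 : l₂ ≤ k) :
    Igrp k l₁ ∩ Igrp k l₂ = {(l₁ - 1) * k + l₂ - l₁ * (l₁ + 1) / 2} :=
  Igrp_inter_singleton_general k l₁ l₂ h1 h2 h3
end

section
/- The union of the sets I_1, I_2, ..., I_k equals {1, 2, ..., k(k-1)/2}, and every element i ∈ {1, ..., k(k-1)/2} belongs to exactly two of the sets I_1, ..., I_k. -/
/-!
Packets correspond to pairs `a < b` of groups: `pTwo k b a` is the position of `(a, b)` in the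
lexicographic enumeration of these pairs, and `pOne k a c = pTwo k (a + c) a`, so `I¹_l` lists
the packets of the pairs `(l, b)` and `I²_l` those of the pairs `(a, l)`. The pairs with first
entry `a` fill the `k - a` positions following the first `∑_{1 ≤ j < a} (k - j)`, so the
enumeration is a bijection onto `{1, …, k(k-1)/2}`, and the packet of `(a, b)` lies in exactly
the groups `a` and `b`.
-/

open Finset

lemma mul_succ_div_two (a : ℕ) : a * (a + 1) / 2 = a * (a - 1) / 2 + a := by
  simpa [mul_comm] using Nat.triangle_succ a

lemma pOne_eq_pTwo (k l b : ℕ) : pOne k l b = pTwo k (l + b) l := by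
  rw [pOne, pTwo, mul_succ_div_two]
  omega

def ltPairs (k : ℕ) : Finset (ℕ × ℕ) := (Icc 1 k ×ˢ Icc 1 k).filter fun p => p.1 < p.2

lemma mem_ltPairs {k : ℕ} {p : ℕ × ℕ} :
    p ∈ ltPairs k ↔ 1 ≤ p.1 ∧ p.1 < p.2 ∧ p.2 ≤ k := by
  simp only [ltPairs, mem_filter, mem_product, mem_Icc]
  omega

def pairIdx (k : ℕ) (p : ℕ × ℕ) : ℕ := pTwo k p.2 p.1

lemma mem_I1_iff {k l i : ℕ} (hl : 1 ≤ l) :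
    i ∈ I1 k l ↔ ∃ p ∈ ltPairs k, p.1 = l ∧ pairIdx k p = i := by
  simp only [I1, mem_image, mem_Icc, mem_ltPairs, pairIdx, pOne_eq_pTwo]
  constructor
  · rintro ⟨b, hb, rfl⟩
    exact ⟨(l, l + b), by grind⟩
  · rintro ⟨⟨a, c⟩, hp, rfl, rfl⟩
    exact ⟨c - a, by grind⟩

lemma mem_I2_iff {k l i : ℕ} (hl : l ≤ k) :
    i ∈ I2 k l ↔ ∃ p ∈ ltPairs k, p.2 = l ∧ pairIdx k p = i := by
  simp only [I2, mem_image, mem_Icc, mem_ltPairs, pairIdx]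
  constructor
  · rintro ⟨a, ha, rfl⟩
    exact ⟨(a, l), by grind⟩
  · rintro ⟨⟨a, c⟩, hp, rfl, rfl⟩
    exact ⟨a, by grind⟩

lemma mem_Igrp_iff {k l i : ℕ} (hl : l ∈ Icc 1 k) :
    i ∈ Igrp k l ↔ ∃ p ∈ ltPairs k, (p.1 = l ∨ p.2 = l) ∧ pairIdx k p = i := by
  rw [mem_Icc] at hl
  simp only [Igrp, mem_union, mem_I1_iff hl.1, mem_I2_iff hl.2, or_and_right,
    and_or_left, exists_or]

lemma pairIdx_mem_Igrp_fst {k : ℕ} {p : ℕ × ℕ} (hp : p ∈ ltPairs k) :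
    pairIdx k p ∈ Igrp k p.1 :=
  (mem_Igrp_iff (by grind [mem_ltPairs])).2 ⟨p, hp, Or.inl rfl, rfl⟩

lemma pairIdx_mem_Igrp_snd {k : ℕ} {p : ℕ × ℕ} (hp : p ∈ ltPairs k) :
    pairIdx k p ∈ Igrp k p.2 :=
  (mem_Igrp_iff (by grind [mem_ltPairs])).2 ⟨p, hp, Or.inr rfl, rfl⟩

def blockStart (k a : ℕ) : ℕ := ∑ j ∈ Ico 1 a, (k - j)

lemma blockStart_succ (k : ℕ) {a : ℕ} (ha : 1 ≤ a) :
    blockStart k (a + 1) = blockStart k a + (k - a) :=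
  sum_Ico_succ_top ha _

lemma blockStart_mono (k : ℕ) : Monotone (blockStart k) := fun _ _ h =>
  sum_le_sum_of_subset (Ico_subset_Ico le_rfl h)

lemma blockStart_add_triangle (k : ℕ) {a : ℕ} (ha : a ≤ k + 1) :
    blockStart k a + a * (a - 1) / 2 = (a - 1) * k := by
  rcases Nat.eq_zero_or_pos a with rfl | ha0
  · simp [blockStart]
  rw [blockStart, ← sum_range_id, sum_range_eq_add_Ico _ ha0, zero_add, ← sum_add_distrib,
    sum_congr rfl fun j hj => Nat.sub_add_cancel (by grind), sum_const, Nat.card_Ico,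
    smul_eq_mul]

lemma blockStart_self (k : ℕ) : blockStart k k = k * (k - 1) / 2 := by
  have := blockStart_add_triangle k k.le_succ
  have := Nat.div_two_mul_two_of_even (Nat.even_mul_pred_self k)
  rw [mul_comm (k - 1)] at *
  omega

lemma pTwo_eq_blockStart_add {k a b : ℕ} (hab : a ≤ b) (ha : a ≤ k + 1) :
    pTwo k b a = blockStart k a + (b - a) := by
  have := blockStart_add_triangle k ha
  rw [pTwo, mul_succ_div_two]
  omega

lemma pairIdx_eq {k : ℕ} {p : ℕ × ℕ} (hp : p ∈ ltPairs k) :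
    pairIdx k p = blockStart k p.1 + (p.2 - p.1) := by
  rw [mem_ltPairs] at hp
  exact pTwo_eq_blockStart_add (by omega) (by omega)

lemma pairIdx_mem_Ioc {k : ℕ} {p : ℕ × ℕ} (hp : p ∈ ltPairs k) :
    pairIdx k p ∈ Ioc (blockStart k p.1) (blockStart k (p.1 + 1)) := by
  have := mem_ltPairs.1 hp
  rw [mem_Ioc, pairIdx_eq hp, blockStart_succ k this.1]
  omega

lemma pairIdx_injOn (k : ℕ) : Set.InjOn (pairIdx k) (ltPairs k) := by
  have key : ∀ p ∈ ltPairs k, ∀ q ∈ ltPairs k, p.1 < q.1 → pairIdx k p < pairIdx k q :=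
    fun p hp q hq h => calc
      pairIdx k p ≤ blockStart k (p.1 + 1) := (mem_Ioc.1 (pairIdx_mem_Ioc hp)).2
      _ ≤ blockStart k q.1 := blockStart_mono k h
      _ < pairIdx k q := (mem_Ioc.1 (pairIdx_mem_Ioc hq)).1
  intro p hp q hq hpq
  have h1 : p.1 = q.1 := by
    rcases lt_trichotomy p.1 q.1 with h | h | h
    · exact absurd hpq (key p hp q hq h).ne
    · exact h
    · exact absurd hpq (key q hq p hp h).ne'
  rw [pairIdx_eq hp, pairIdx_eq hq, h1] at hpq
  have := mem_ltPairs.1 hp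
  have := mem_ltPairs.1 hq
  exact Prod.ext h1 (by omega)

lemma Icc_blockStart_subset_image_pairIdx {k a : ℕ} (ha : a ≤ k) :
    Icc 1 (blockStart k a) ⊆ (ltPairs k).image (pairIdx k) := by
  induction a with
  | zero => simp [blockStart]
  | succ a ih =>
    intro i hi
    rcases Nat.eq_zero_or_pos a with rfl | ha0
    · simp [blockStart] at hi
    rw [mem_Icc, blockStart_succ k ha0] at hi
    by_cases hia : i ≤ blockStart k a
    · exact ih (by omega) (mem_Icc.2 ⟨hi.1, hia⟩)
    have hp : (a, a + (i - blockStart k a)) ∈ ltPairs k := mem_ltPairs.2 (by grind)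
    exact mem_image.2 ⟨_, hp, by rw [pairIdx_eq hp]; dsimp only; omega⟩

lemma image_pairIdx_ltPairs (k : ℕ) :
    (ltPairs k).image (pairIdx k) = Icc 1 (k * (k - 1) / 2) := by
  refine subset_antisymm ?_ (blockStart_self k ▸ Icc_blockStart_subset_image_pairIdx le_rfl)
  intro i hi
  obtain ⟨p, hp, rfl⟩ := mem_image.1 hi
  have hIoc := mem_Ioc.1 (pairIdx_mem_Ioc hp)
  have := blockStart_mono k (show p.1 + 1 ≤ k by grind [mem_ltPairs])
  rw [mem_Icc, ← blockStart_self]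
  omega

lemma filter_pairIdx_mem_Igrp {k : ℕ} {p : ℕ × ℕ} (hp : p ∈ ltPairs k) :
    (Icc 1 k).filter (fun l => pairIdx k p ∈ Igrp k l) = {p.1, p.2} := by
  ext l
  simp only [mem_filter, mem_insert, mem_singleton]
  constructor
  · rintro ⟨hl, hi⟩
    obtain ⟨q, hq, hql, hqp⟩ := (mem_Igrp_iff hl).1 hi
    obtain rfl := pairIdx_injOn k hq hp hqp
    tauto
  · rintro (rfl | rfl)
    · exact ⟨by grind [mem_ltPairs], pairIdx_mem_Igrp_fst hp⟩
    · exact ⟨by grind [mem_ltPairs], pairIdx_mem_Igrp_snd hp⟩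

theorem Igrp_cover_and_double_general (k : ℕ) :
    (Finset.Icc 1 k).biUnion (Igrp k) = Finset.Icc 1 (k * (k - 1) / 2) ∧
    ∀ i ∈ Finset.Icc 1 (k * (k - 1) / 2),
      ((Finset.Icc 1 k).filter (fun l => i ∈ Igrp k l)).card = 2 := by
  rw [← image_pairIdx_ltPairs]
  constructor
  · ext i
    simp only [mem_biUnion, mem_image]
    constructor
    · rintro ⟨l, hl, hi⟩
      obtain ⟨p, hp, -, rfl⟩ := (mem_Igrp_iff hl).1 hi
      exact ⟨p, hp, rfl⟩
    · rintro ⟨p, hp, rfl⟩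
      exact ⟨p.1, by grind [mem_ltPairs], pairIdx_mem_Igrp_fst hp⟩
  · intro i hi
    obtain ⟨p, hp, rfl⟩ := mem_image.1 hi
    rw [filter_pairIdx_mem_Igrp hp]
    exact card_pair (mem_ltPairs.1 hp).2.1.ne

/-- The sets `I_1,…,I_k` cover `{1,…,k(k-1)/2}` and every index belongs to
exactly two of them. -/
theorem Igrp_cover_and_double (k : ℕ) (hk : 2 ≤ k) :
    (Finset.Icc 1 k).biUnion (Igrp k) = Finset.Icc 1 (k * (k - 1) / 2) ∧
    ∀ i ∈ Finset.Icc 1 (k * (k - 1) / 2),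
      ((Finset.Icc 1 k).filter (fun l => i ∈ Igrp k l)).card = 2 :=
  Igrp_cover_and_double_general k
end

section
/- In the (k,2)-GIC problem, the user partition into groups G_1, ..., G_k is feasible for the UPM scheme and achieves broadcast rate ∑_{e=1}^k (|Y_e| - c_e) = k, where Y_e = I_e (so |Y_e| = k-1) and c_e = min over users in G_e of |A_i^j ∩ Y_e| = k - 2. -/
open Finset

/-!
Packet indices enumerate the pairs `{i, j}` with `1 ≤ i < j ≤ k` in lexicographic order:
`pOne k i a` is the index of `{i, i + a}`, and `pTwo k l a = pOne k a (l - a)` is that of `{a, l}`.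
So `I_l` is the set of indices of the `k - 1` pairs containing `l`. Each user of `G_l` knows all of
them but its own, so `c_l = k - 2` and every group costs one transmission.
-/

section PacketIndex

variable {k i i' l a a' : ℕ}

lemma pOne_eq_pOne_zero_add (hi : i ≤ k) : pOne k i a = pOne k i 0 + a := by
  have h : i * (i - 1) / 2 ≤ (i - 1) * k :=
    (Nat.div_le_self _ _).trans (by rw [mul_comm]; exact Nat.mul_le_mul_left _ hi)
  unfold pOne
  omega

lemma pOne_strictMono (hi : i ≤ k) : StrictMono (pOne k i) := fun a a' h => by
  rw [pOne_eq_pOne_zero_add hi, pOne_eq_pOne_zero_add (a := a') hi]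
  omega

/-- Block `i + 1` of the enumeration starts where block `i`, of length `k - i`, ends. -/
lemma pOne_succ (hi : 1 ≤ i) (hik : i ≤ k) : pOne k (i + 1) a = pOne k i (k - i + a) := by
  obtain ⟨j, rfl⟩ : ∃ j, i = j + 1 := ⟨i - 1, by omega⟩
  have htri : (j + 1 + 1) * (j + 1) / 2 = (j + 1) * j / 2 + (j + 1) := by
    rw [show (j + 1 + 1) * (j + 1) = (j + 1) * j + (j + 1) * 2 by ring, Nat.add_mul_div_right _ _ two_pos]
  have hk : (j + 1) * k = j * k + k := by ring
  simp only [pOne, Nat.add_sub_cancel, htri, hk]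
  omega

lemma pOne_lt_pOne_of_lt (hi : 1 ≤ i) (hii' : i < i') (hi'k : i' ≤ k) (ha : a ≤ k - i)
    (ha' : 1 ≤ a') : pOne k i a < pOne k i' a' := by
  induction i', hii' using Nat.le_induction generalizing a' with
  | base =>
    rw [pOne_succ hi (by omega)]
    exact pOne_strictMono (by omega) (by omega)
  | succ m him ih =>
    rw [pOne_succ (by omega) (by omega)]
    exact ih (by omega) (by omega)

lemma pTwo_eq_pOne (hal : a ≤ l) : pTwo k l a = pOne k a (l - a) := by
  have htri : a * (a + 1) / 2 = a * (a - 1) / 2 + a := by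
    rcases a with _ | a
    · rfl
    · rw [show (a + 1) * (a + 1 + 1) = (a + 1) * (a + 1 - 1) + a * 2 + 2 by
        simp only [Nat.add_sub_cancel]; ring]
      omega
  simp only [pTwo, pOne, htri]
  omega

end PacketIndex

section Groups

variable {k l : ℕ}

lemma card_I1 (hlk : l ≤ k) : (I1 k l).card = k - l := by
  rw [I1, card_image_of_injective _ (pOne_strictMono hlk).injective, Nat.card_Icc]
  omega

lemma card_I2 (hlk : l ≤ k) : (I2 k l).card = l - 1 := by
  have hmono : StrictMonoOn (pTwo k l) (Icc 1 (l - 1)) := fun a ha a' ha' h => by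
    simp only [coe_Icc, Set.mem_Icc] at ha ha'
    rw [pTwo_eq_pOne (by omega), pTwo_eq_pOne (by omega)]
    exact pOne_lt_pOne_of_lt ha.1 h (by omega) (by omega) (by omega)
  rw [I2, card_image_of_injOn hmono.injOn, Nat.card_Icc]
  omega

lemma disjoint_I1_I2 (hlk : l ≤ k) : Disjoint (I1 k l) (I2 k l) := by
  simp only [disjoint_left, I1, I2, mem_image, mem_Icc, not_exists, not_and]
  rintro _ ⟨a, ha, rfl⟩ b hb hba
  rw [pTwo_eq_pOne (by omega)] at hba
  exact (pOne_lt_pOne_of_lt hb.1 (by omega) hlk (by omega) ha.1).ne hba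

lemma card_Igrp (hl : 1 ≤ l) (hlk : l ≤ k) : (Igrp k l).card = k - 1 := by
  rw [Igrp, card_union_of_disjoint (disjoint_I1_I2 hlk), card_I1 hlk, card_I2 hlk]
  omega

end Groups

/-- In the `(k,2)`-GIC problem the group partition `G_1,…,G_k` is feasible for
the UPM scheme with `Y_e = I_e` of size `k-1`, local side information
`c_e = min_{i} |(I_e \ {i}) ∩ Y_e| = k - 2`, and total broadcast rate
`∑_{e=1}^k (|Y_e| - c_e) = k`. -/
theorem UPM_rate_k (k : ℕ) (hk : 2 ≤ k) :
    (∀ e ∈ Finset.Icc 1 k, (Igrp k e).card = k - 1 ∧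
      ∀ i ∈ Igrp k e, ((Igrp k e).erase i ∩ Igrp k e).card = k - 2) ∧
    ∑ e ∈ Finset.Icc 1 k, ((Igrp k e).card - (k - 2)) = k := by
  have hcard : ∀ e ∈ Icc 1 k, (Igrp k e).card = k - 1 := fun e he =>
    card_Igrp (mem_Icc.1 he).1 (mem_Icc.1 he).2
  refine ⟨fun e he => ⟨hcard e he, fun i hi => ?_⟩, ?_⟩
  · rw [inter_eq_left.2 (erase_subset i _), card_erase_of_mem hi, hcard e he]
    omega
  · have hone : k - 1 - (k - 2) = 1 := by omega
    rw [sum_congr rfl fun e he => by rw [hcard e he, hone], sum_const, Nat.card_Icc,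
      smul_eq_mul, mul_one, Nat.add_sub_cancel]
end

section
/- The optimal broadcast rate of the UPM scheme is at most that of the PPM scheme: for any GIC problem, min over valid user partitions of the UPM objective ∑_e (|Y_e| - c_e) is at most min over valid packet partitions of the PPM objective ∑_e (|T_e| - d_e). -/
open Finset

/-- The finite set of users of a GIC problem with `m` packets, where packet `i`
is demanded by `U i` users: user `u_i^j` is the pair `(i, j)`. -/
def userSet (m : ℕ) (U : ℕ → ℕ) : Finset (ℕ × ℕ) :=
  (Finset.Icc 1 m).biUnion (fun i => (Finset.Icc 1 (U i)).image (fun j => (i, j)))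

/-- The set of broadcast rates achievable by the PPM scheme: partition the packet
set `[m]` into parts `T_e` and send `|T_e| - d_e` coded packets per part, where
`d_e = min_{i ∈ T_e, j ∈ [U i]} |A_i^j ∩ T_e|`. -/
def PPMrates (m : ℕ) (U : ℕ → ℕ) (A : ℕ → ℕ → Finset ℕ) : Set ℕ :=
  {r : ℕ | ∃ (h : ℕ) (T : Fin h → Finset ℕ),
    (∀ e f, e ≠ f → Disjoint (T e) (T f)) ∧
    (Finset.univ.biUnion T = Finset.Icc 1 m) ∧
    (∀ e, (T e).Nonempty) ∧
    r = ∑ e, ((T e).card -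
      sInf {n : ℕ | ∃ i ∈ T e, ∃ j ∈ Finset.Icc 1 (U i), n = (A i j ∩ T e).card})}

/-- The set of broadcast rates achievable by the UPM scheme: partition the user
set into parts `W_e` and send `|Y_e| - c_e` coded packets per part, where `Y_e`
is the set of packets demanded in `W_e` and
`c_e = min_{u_i^j ∈ W_e} |A_i^j ∩ Y_e|`. -/
def UPMrates (m : ℕ) (U : ℕ → ℕ) (A : ℕ → ℕ → Finset ℕ) : Set ℕ :=
  {r : ℕ | ∃ (h : ℕ) (W : Fin h → Finset (ℕ × ℕ)),
    (∀ e f, e ≠ f → Disjoint (W e) (W f)) ∧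
    (Finset.univ.biUnion W = userSet m U) ∧
    (∀ e, (W e).Nonempty) ∧
    r = ∑ e, (((W e).image Prod.fst).card -
      sInf {n : ℕ | ∃ u ∈ W e, n = (A u.1 u.2 ∩ (W e).image Prod.fst).card})}

/-! A packet partition `T` induces the user partition `e ↦ demandingUsers U (T e)`. Since every
packet is demanded by some user, the induced part demands exactly the packets of `T e`, and its
users are exactly the pairs `(i, j)` over which the PPM minimum `d_e` is taken, so the two
rates coincide. Taking `T` optimal (PPM rates exist, e.g. via the partition into singletons)
gives the inequality. -/

section demandingUsers

variable (U : ℕ → ℕ)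

def demandingUsers (T : Finset ℕ) : Finset (ℕ × ℕ) :=
  T.biUnion fun i => (Icc 1 (U i)).image fun j => (i, j)

theorem userSet_eq_demandingUsers (m : ℕ) : userSet m U = demandingUsers U (Icc 1 m) := rfl

variable {U}

theorem mem_demandingUsers {T : Finset ℕ} {u : ℕ × ℕ} :
    u ∈ demandingUsers U T ↔ u.1 ∈ T ∧ u.2 ∈ Icc 1 (U u.1) := by
  constructor
  · simp only [demandingUsers, mem_biUnion, mem_image]
    rintro ⟨i, hi, j, hj, rfl⟩
    exact ⟨hi, hj⟩
  · rintro ⟨h1, h2⟩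
    exact mem_biUnion.mpr ⟨u.1, h1, mem_image.mpr ⟨u.2, h2, rfl⟩⟩

theorem image_fst_demandingUsers {T : Finset ℕ} (hU : ∀ i ∈ T, 1 ≤ U i) :
    (demandingUsers U T).image Prod.fst = T := by
  ext i
  simp only [mem_image, mem_demandingUsers]
  constructor
  · rintro ⟨u, ⟨hu, _⟩, rfl⟩
    exact hu
  · intro hi
    exact ⟨(i, 1), ⟨hi, mem_Icc.mpr ⟨le_rfl, hU i hi⟩⟩, rfl⟩

theorem disjoint_demandingUsers {T T' : Finset ℕ} (h : Disjoint T T') :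
    Disjoint (demandingUsers U T) (demandingUsers U T') :=
  disjoint_left.mpr fun _ hu hu' =>
    disjoint_left.mp h (mem_demandingUsers.mp hu).1 (mem_demandingUsers.mp hu').1

theorem biUnion_demandingUsers {ι : Type*} (s : Finset ι) (T : ι → Finset ℕ) :
    s.biUnion (fun e => demandingUsers U (T e)) = demandingUsers U (s.biUnion T) :=
  (biUnion_biUnion s T _).symm

end demandingUsers

theorem PPMrates_nonempty (m : ℕ) (U : ℕ → ℕ) (A : ℕ → ℕ → Finset ℕ) :
    (PPMrates m U A).Nonempty := by
  refine ⟨_, m, fun e => {(e : ℕ) + 1}, ?_, ?_, fun _ => singleton_nonempty _, rfl⟩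
  · intro e f hef
    simpa [Fin.val_inj] using hef
  · ext i
    simp only [mem_biUnion, mem_univ, mem_singleton, true_and, mem_Icc]
    constructor
    · rintro ⟨e, rfl⟩
      omega
    · intro hi
      exact ⟨⟨i - 1, by omega⟩, by simp only; omega⟩

theorem PPMrates_subset_UPMrates {m : ℕ} {U : ℕ → ℕ} (hU : ∀ i, 1 ≤ U i)
    (A : ℕ → ℕ → Finset ℕ) : PPMrates m U A ⊆ UPMrates m U A := by
  rintro r ⟨h, T, hdisj, hunion, hne, rfl⟩
  have himage : ∀ e, (demandingUsers U (T e)).image Prod.fst = T e :=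
    fun e => image_fst_demandingUsers fun i _ => hU i
  refine ⟨h, fun e => demandingUsers U (T e),
    fun e f hef => disjoint_demandingUsers (hdisj e f hef),
    by rw [biUnion_demandingUsers, hunion, userSet_eq_demandingUsers],
    fun e => image_nonempty.mp ((himage e).symm ▸ hne e), ?_⟩
  refine sum_congr rfl fun e _ => ?_
  simp only [himage]
  congr 2
  ext n
  simp only [Set.mem_ofPred_eq, mem_demandingUsers, Prod.exists, and_assoc, exists_and_left]

theorem UPM_le_PPM_general (m : ℕ) (U : ℕ → ℕ) (hU : ∀ i, 1 ≤ U i)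
    (A : ℕ → ℕ → Finset ℕ) :
    sInf (UPMrates m U A) ≤ sInf (PPMrates m U A) :=
  Nat.sInf_le (PPMrates_subset_UPMrates hU A (Nat.sInf_mem (PPMrates_nonempty m U A)))

/-- The optimal broadcast rate of the UPM scheme is at most that of the PPM
scheme. -/
theorem UPM_le_PPM (m : ℕ) (hm : 1 ≤ m) (U : ℕ → ℕ) (hU : ∀ i, 1 ≤ U i)
    (A : ℕ → ℕ → Finset ℕ)
    (hA : ∀ i ∈ Finset.Icc 1 m, ∀ j ∈ Finset.Icc 1 (U i),
      A i j ⊆ (Finset.Icc 1 m).erase i) :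
    sInf (UPMrates m U A) ≤ sInf (PPMrates m U A) :=
  UPM_le_PPM_general m U hU A
end
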